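/- Let T, d be positive integers with T ≥ d, and let P be a real polynomial in the variables W_1, …, W_T of total degree at most d with ‖P‖ = 1. Set η = 4^{-2^d}. For each j ∈ {1, …, T}, let R_j be the sub-polynomial of P consisting of all monomials in which the exponent of W_j is at most 1, and suppose that ‖R_j‖ ≤ η for every j ∈ {1, …, d}. Then for every j ∈ {1, …, d}, writing P = W_1²⋯W_j²·H_j + L_j where L_j is the sub-polynomial of P consisting of all monomials of P not divisible by W_1²⋯W_j², one has ‖L_j‖ ≤ 4·η^{1/2^{j−1}}. -/

import Mathlib

/-!
Union bound: a monomial not divisible by `W_1² ⋯ W_j²` is not divisible by some `W_i²`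
with `i ≤ j`, so it occurs in `R_i`. Hence `‖L_j‖² ≤ ‖R_1‖² + ⋯ + ‖R_j‖² ≤ j η²`, and
`√j η ≤ 4 η^{1/2^{j-1}}` because `j η ≤ 1` and `η ≤ 1`.
-/

open MvPolynomial

/-- Squared ℓ2 norm of the coefficient vector of a multivariate polynomial
in the standard monomial basis. -/
noncomputable def coeffNormSq {σ : Type*} (P : MvPolynomial σ ℝ) : ℝ :=
  ∑ m ∈ P.support, (P.coeff m) ^ 2

/-- ℓ2 norm of the coefficient vector of a multivariate polynomial. -/
noncomputable def coeffNorm {σ : Type*} (P : MvPolynomial σ ℝ) : ℝ :=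
  Real.sqrt (coeffNormSq P)

/-- The sub-polynomial of `P` consisting of all monomials in which the exponent
of the variable `j` is at most `1` (i.e. the part of `P` not divisible by `W_j²`). -/
noncomputable def lowPart {T : ℕ} (P : MvPolynomial (Fin T) ℝ) (j : Fin T) :
    MvPolynomial (Fin T) ℝ :=
  ∑ m ∈ P.support.filter (fun m => m j ≤ 1), monomial m (P.coeff m)

/-- The sub-polynomial of `P` consisting of all monomials of `P` not divisible by
`W_1² ⋯ W_j²` (variables indexed `0, …, j-1` in `Fin T`). -/
noncomputable def notAllSqPart {T : ℕ} (P : MvPolynomial (Fin T) ℝ) (j : ℕ) :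
    MvPolynomial (Fin T) ℝ :=
  ∑ m ∈ P.support.filter (fun m => ∃ i : Fin T, (i : ℕ) < j ∧ m i ≤ 1),
    monomial m (P.coeff m)

open Finset

theorem Finset.sum_le_sum_sum_of_forall_exists_mem {ι α M : Type*} [AddCommMonoid M]
    [PartialOrder M] [IsOrderedAddMonoid M] [DecidableEq α] {s : Finset ι} {t : ι → Finset α}
    {A : Finset α} {f : α → M} (hf : ∀ x, 0 ≤ f x) (hA : ∀ x ∈ A, ∃ i ∈ s, x ∈ t i) :
    ∑ x ∈ A, f x ≤ ∑ i ∈ s, ∑ x ∈ t i, f x := by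
  have hcover : A ⊆ (s.sigma t).image Sigma.snd := fun x hx => by
    obtain ⟨i, hi, hxi⟩ := hA x hx
    exact mem_image.2 ⟨⟨i, x⟩, mem_sigma.2 ⟨hi, hxi⟩, rfl⟩
  calc ∑ x ∈ A, f x ≤ ∑ x ∈ (s.sigma t).image Sigma.snd, f x :=
        sum_le_sum_of_subset_of_nonneg hcover fun x _ _ => hf x
    _ ≤ ∑ p ∈ s.sigma t, f p.2 := sum_image_le_of_nonneg fun x _ => hf x
    _ = ∑ i ∈ s, ∑ x ∈ t i, f x := sum_sigma s t fun p => f p.2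

section CoeffNorm

variable {σ : Type*}

theorem coeffNorm_sq (P : MvPolynomial σ ℝ) : coeffNorm P ^ 2 = coeffNormSq P :=
  Real.sq_sqrt (sum_nonneg fun m _ => sq_nonneg (P.coeff m))

theorem coeffNormSq_eq_sum_of_support_subset {P : MvPolynomial σ ℝ} {s : Finset (σ →₀ ℕ)}
    (hs : P.support ⊆ s) : coeffNormSq P = ∑ m ∈ s, P.coeff m ^ 2 :=
  sum_subset hs fun m _ hm => by simp [notMem_support_iff.mp hm]

theorem coeffNormSq_sum_monomial (s : Finset (σ →₀ ℕ)) (f : (σ →₀ ℕ) → ℝ) :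
    coeffNormSq (∑ m ∈ s, monomial m (f m)) = ∑ m ∈ s, f m ^ 2 := by
  classical
  have hcoeff : ∀ n, (∑ m ∈ s, monomial m (f m)).coeff n = if n ∈ s then f n else 0 := by
    intro n
    simp [coeff_sum, coeff_monomial]
  rw [coeffNormSq_eq_sum_of_support_subset (s := s)]
  · exact sum_congr rfl fun m hm => by rw [hcoeff, if_pos hm]
  · intro n hn
    by_contra hns
    exact mem_support_iff.mp hn (by rw [hcoeff, if_neg hns])

end CoeffNorm

section NotAllSqPart

variable {T : ℕ}

theorem coeffNormSq_notAllSqPart_le (P : MvPolynomial (Fin T) ℝ) (j : ℕ) :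
    coeffNormSq (notAllSqPart P j) ≤
      ∑ i ∈ univ.filter (fun i : Fin T => (i : ℕ) < j), coeffNormSq (lowPart P i) := by
  simp only [notAllSqPart, lowPart, coeffNormSq_sum_monomial]
  refine sum_le_sum_sum_of_forall_exists_mem (fun m => sq_nonneg (P.coeff m)) fun m hm => ?_
  obtain ⟨hmP, i, hij, hmi⟩ := mem_filter.1 hm
  exact ⟨i, mem_filter.2 ⟨mem_univ i, hij⟩, mem_filter.2 ⟨hmP, hmi⟩⟩

theorem coeffNorm_notAllSqPart_le (P : MvPolynomial (Fin T) ℝ) (j : ℕ) {ε : ℝ} (hε : 0 ≤ ε)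
    (hlow : ∀ i : Fin T, (i : ℕ) < j → coeffNorm (lowPart P i) ≤ ε) :
    coeffNorm (notAllSqPart P j) ≤ √j * ε := by
  have hsq : coeffNormSq (notAllSqPart P j) ≤ j * ε ^ 2 :=
    calc coeffNormSq (notAllSqPart P j) ≤ _ := coeffNormSq_notAllSqPart_le P j
      _ ≤ #(univ.filter (fun i : Fin T => (i : ℕ) < j)) • ε ^ 2 := by
          refine sum_le_card_nsmul _ _ _ fun i hi => ?_
          rw [← coeffNorm_sq]
          exact pow_le_pow_left₀ (Real.sqrt_nonneg _) (hlow i (mem_filter.1 hi).2) 2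
      _ ≤ j * ε ^ 2 := by
          rw [Fin.card_filter_val_lt, nsmul_eq_mul]
          gcongr
          exact_mod_cast min_le_right T j
  calc coeffNorm (notAllSqPart P j) ≤ √(j * ε ^ 2) := Real.sqrt_le_sqrt hsq
    _ = √j * ε := by rw [Real.sqrt_mul (Nat.cast_nonneg j), Real.sqrt_sq hε]

end NotAllSqPart

theorem Real.sqrt_mul_le_rpow_of_mul_le_one {j η x : ℝ} (hj : 0 ≤ j) (hη0 : 0 < η) (hη1 : η ≤ 1)
    (hjη : j * η ≤ 1) (hx : x ≤ 1 / 2) : √j * η ≤ η ^ x :=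
  calc √j * η = √(j * η) * √η := by rw [Real.sqrt_mul hj, mul_assoc, Real.mul_self_sqrt hη0.le]
    _ ≤ 1 * √η := by gcongr; exact Real.sqrt_le_one.mpr hjη
    _ = η ^ (1 / 2 : ℝ) := by rw [one_mul, Real.sqrt_eq_rpow]
    _ ≤ η ^ x := Real.rpow_le_rpow_of_exponent_ge hη0 hη1 hx

theorem sqrt_mul_inv_four_pow_le (d j : ℕ) (hj1 : 1 ≤ j) (hjd : j ≤ d) :
    √j * ((4 : ℝ) ^ (2 ^ d))⁻¹ ≤ 4 * (((4 : ℝ) ^ (2 ^ d))⁻¹) ^ ((1 : ℝ) / 2 ^ (j - 1)) := by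
  set η : ℝ := ((4 : ℝ) ^ (2 ^ d))⁻¹
  have hη0 : 0 < η := by positivity
  have hη1 : η ≤ 1 := inv_le_one_of_one_le₀ (one_le_pow₀ (by norm_num))
  obtain rfl | hj2 := hj1.eq_or_lt
  · norm_num
    linarith
  have hj_le : j ≤ 4 ^ (2 ^ d) :=
    hjd.trans ((Nat.lt_two_pow_self).le.trans (Nat.lt_pow_self (by norm_num)).le)
  have hjη : (j : ℝ) * η ≤ 1 := by
    rw [← div_eq_mul_inv, div_le_one (by positivity)]
    exact_mod_cast hj_le
  have hx : (1 : ℝ) / 2 ^ (j - 1) ≤ 1 / 2 := by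
    gcongr
    exact le_self_pow₀ (by norm_num) (by omega)
  calc √j * η ≤ η ^ ((1 : ℝ) / 2 ^ (j - 1)) :=
        Real.sqrt_mul_le_rpow_of_mul_le_one (Nat.cast_nonneg j) hη0 hη1 hjη hx
    _ ≤ 4 * η ^ ((1 : ℝ) / 2 ^ (j - 1)) := le_mul_of_one_le_left (by positivity) (by norm_num)

theorem stmt3_general (T d : ℕ)
    (P : MvPolynomial (Fin T) ℝ)
    (hR : ∀ i : Fin T, (i : ℕ) < d → coeffNorm (lowPart P i) ≤ ((4 : ℝ) ^ (2 ^ d))⁻¹)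
    (j : ℕ) (hj1 : 1 ≤ j) (hjd : j ≤ d) :
    coeffNorm (notAllSqPart P j) ≤
      4 * (((4 : ℝ) ^ (2 ^ d))⁻¹) ^ ((1 : ℝ) / 2 ^ (j - 1)) :=
  calc coeffNorm (notAllSqPart P j) ≤ √j * ((4 : ℝ) ^ (2 ^ d))⁻¹ :=
        coeffNorm_notAllSqPart_le P j (by positivity) fun i hi => hR i (hi.trans_le hjd)
    _ ≤ _ := sqrt_mul_inv_four_pow_le d j hj1 hjd

theorem stmt3 (T d : ℕ) (hT : 1 ≤ T) (hd : 1 ≤ d) (hdT : d ≤ T)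
    (P : MvPolynomial (Fin T) ℝ) (hPd : P.totalDegree ≤ d)
    (hPn : coeffNorm P = 1)
    (hR : ∀ i : Fin T, (i : ℕ) < d → coeffNorm (lowPart P i) ≤ ((4 : ℝ) ^ (2 ^ d))⁻¹)
    (j : ℕ) (hj1 : 1 ≤ j) (hjd : j ≤ d) :
    coeffNorm (notAllSqPart P j) ≤
      4 * (((4 : ℝ) ^ (2 ^ d))⁻¹) ^ ((1 : ℝ) / 2 ^ (j - 1)) :=
  stmt3_general T d P hR j hj1 hjd
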